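/- Let λ₁, λ₂ ∈ ℝ and let C > 0 be a constant such that −P(g) ≤ C · H(g)^{3/2} · M(g)^{1/2} for every Schwartz function g : ℝ³ → ℂ. Then for every δ ∈ (0,1) there exists α > 0 such that every Schwartz function f : ℝ³ → ℂ satisfying E(f)·M(f) ≤ (1−δ) · 2/(27 C²) and H(f)·M(f) ≤ 4/(9 C²) also satisfies the coercivity bound G(f)·M(f) ≥ α · H(f)·M(f). -/

import Mathlib

open MeasureTheory FourierTransform SchwartzMap

noncomputable section

-- The dipolar symbol `m(ξ) = (4π/3)(2ξ₃² − ξ₂² − ξ₁²)/|ξ|²`, with `m(0) := 0`.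
open Classical in
def dipm (ξ : EuclideanSpace ℝ (Fin 3)) : ℝ :=
  if ξ = 0 then 0
  else (4 * Real.pi / 3) * (2 * (ξ 2) ^ 2 - (ξ 1) ^ 2 - (ξ 0) ^ 2) / ‖ξ‖ ^ 2

-- The mass `M(f) = ∫ |f|²`.
def massF (f : SchwartzMap (EuclideanSpace ℝ (Fin 3)) ℂ) : ℝ :=
  ∫ x, ‖f x‖ ^ 2

-- The kinetic energy `H(f) = ∫ |∇f|² = ∫ Σ_j |∂_j f|²`.
def kinF (f : SchwartzMap (EuclideanSpace ℝ (Fin 3)) ℂ) : ℝ :=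
  ∫ x, ∑ j : Fin 3, ‖fderiv ℝ (⇑f) x (EuclideanSpace.single j (1 : ℝ))‖ ^ 2

-- The potential energy `P(f) = λ₁∫|f|⁴ + λ₂∫ m(ξ)|𝓕(|f|²)(ξ)|² dξ`.
def potF (l₁ l₂ : ℝ) (f : SchwartzMap (EuclideanSpace ℝ (Fin 3)) ℂ) : ℝ :=
  l₁ * ∫ x, ‖f x‖ ^ 4 +
    l₂ * ∫ ξ, dipm ξ * ‖𝓕 (fun x => ((‖f x‖ ^ 2 : ℝ) : ℂ)) ξ‖ ^ 2

-- The energy `E(f) = (H(f) + P(f))/2`.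
def enF (l₁ l₂ : ℝ) (f : SchwartzMap (EuclideanSpace ℝ (Fin 3)) ℂ) : ℝ :=
  (kinF f + potF l₁ l₂ f) / 2

-- The Pohozaev functional `G(f) = H(f) + (3/2)P(f)`.
def pohF (l₁ l₂ : ℝ) (f : SchwartzMap (EuclideanSpace ℝ (Fin 3)) ℂ) : ℝ :=
  kinF f + (3 / 2) * potF l₁ l₂ f

/-!
Both sides of the claim are scale invariant, so everything can be written in terms of
`s = √(H M)` and `Q = P M`. The Gagliardo–Nirenberg hypothesis gives `-Q ≤ C s³`, hence
`E M ≥ (s² - C s³)/2` and `G M ≥ s² (1 - v)` with `v = 3 C s / 2`, where `v ≤ 1` by the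
kinetic bound. In this variable the energy threshold reads `3 v² - 2 v³ ≤ 1 - δ`, and since
`1 - (3 v² - 2 v³) = (1 - v)² (1 + 2 v)` this keeps `v` at distance at least `√(δ/3)` below `1`.
-/

lemma sqrt_div_three_le_one_sub_of_cubic_le {v δ : ℝ} (hv : v ≤ 1)
    (h : 3 * v ^ 2 - 2 * v ^ 3 ≤ 1 - δ) : √(δ / 3) ≤ 1 - v := by
  have hδ : δ ≤ 3 * (1 - v) ^ 2 := by
    nlinarith [mul_nonneg (sq_nonneg (1 - v)) (sub_nonneg.2 hv)]
  exact Real.sqrt_le_iff.2 ⟨by linarith, by linarith⟩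

lemma sqrt_div_three_mul_sq_le_of_cubic_bound {C δ s Q : ℝ} (hC : 0 < C)
    (hQ : -Q ≤ C * s ^ 3) (hE : (s ^ 2 + Q) / 2 ≤ (1 - δ) * (2 / (27 * C ^ 2)))
    (hK : s ^ 2 ≤ 4 / (9 * C ^ 2)) :
    √(δ / 3) * s ^ 2 ≤ s ^ 2 + 3 / 2 * Q := by
  set v := 3 * C * s / 2 with hv
  have hv_le : v ≤ 1 := by
    have : v ^ 2 ≤ 1 := by
      rw [hv]
      calc (3 * C * s / 2) ^ 2 = 9 * C ^ 2 / 4 * s ^ 2 := by ring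
        _ ≤ 9 * C ^ 2 / 4 * (4 / (9 * C ^ 2)) := by gcongr
        _ = 1 := by field_simp
    nlinarith
  have hcubic : 3 * v ^ 2 - 2 * v ^ 3 ≤ 1 - δ := by
    have hid : 3 * v ^ 2 - 2 * v ^ 3 = 27 * C ^ 2 / 4 * (s ^ 2 - C * s ^ 3) := by
      rw [hv]; ring
    have hlow : s ^ 2 - C * s ^ 3 ≤ 2 * ((1 - δ) * (2 / (27 * C ^ 2))) := by linarith
    calc 3 * v ^ 2 - 2 * v ^ 3 ≤ 27 * C ^ 2 / 4 * (2 * ((1 - δ) * (2 / (27 * C ^ 2)))) := by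
          rw [hid]; gcongr
      _ = 1 - δ := by field_simp; ring
  have hgap := sqrt_div_three_le_one_sub_of_cubic_le hv_le hcubic
  calc √(δ / 3) * s ^ 2 ≤ (1 - v) * s ^ 2 := by gcongr
    _ = s ^ 2 - 3 / 2 * (C * s ^ 3) := by rw [hv]; ring
    _ ≤ s ^ 2 + 3 / 2 * Q := by linarith

lemma rpow_three_halves_mul_rpow_half_mul {H M : ℝ} (hH : 0 ≤ H) (hM : 0 ≤ M) :
    H ^ ((3 : ℝ) / 2) * M ^ ((1 : ℝ) / 2) * M = √(H * M) ^ 3 := by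
  have hM' : M ^ ((1 : ℝ) / 2) * M = M ^ ((3 : ℝ) / 2) := by
    rw [← Real.rpow_add_one' hM (by norm_num)]
    norm_num
  rw [mul_assoc, hM', ← Real.mul_rpow hH hM, Real.sqrt_eq_rpow, ← Real.rpow_natCast,
    ← Real.rpow_mul (mul_nonneg hH hM)]
  norm_num

lemma massF_nonneg (f : SchwartzMap (EuclideanSpace ℝ (Fin 3)) ℂ) : 0 ≤ massF f :=
  integral_nonneg fun _ => by positivity

lemma kinF_nonneg (f : SchwartzMap (EuclideanSpace ℝ (Fin 3)) ℂ) : 0 ≤ kinF f :=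
  integral_nonneg fun _ => Finset.sum_nonneg fun _ _ => by positivity

/-- Coercivity of the Pohozaev functional below the mass–energy threshold:
if `E(f)M(f) ≤ (1−δ)·2/(27C²)` and `H(f)M(f) ≤ 4/(9C²)` then
`G(f)M(f) ≥ α·H(f)M(f)`. -/
theorem pohozaev_coercivity_below_threshold (l₁ l₂ : ℝ) (C : ℝ) (hC : 0 < C)
    (hGN : ∀ g : SchwartzMap (EuclideanSpace ℝ (Fin 3)) ℂ,
      -potF l₁ l₂ g ≤ C * kinF g ^ ((3 : ℝ) / 2) * massF g ^ ((1 : ℝ) / 2)) :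
    ∀ δ : ℝ, 0 < δ → δ < 1 →
      ∃ α : ℝ, 0 < α ∧
        ∀ f : SchwartzMap (EuclideanSpace ℝ (Fin 3)) ℂ,
          enF l₁ l₂ f * massF f ≤ (1 - δ) * (2 / (27 * C ^ 2)) →
          kinF f * massF f ≤ 4 / (9 * C ^ 2) →
          α * (kinF f * massF f) ≤ pohF l₁ l₂ f * massF f := by
  intro δ hδ _
  refine ⟨√(δ / 3), by positivity, fun f hE hK => ?_⟩
  have hH := kinF_nonneg f
  have hM := massF_nonneg f
  have hs : kinF f * massF f = √(kinF f * massF f) ^ 2 :=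
    (Real.sq_sqrt (mul_nonneg hH hM)).symm
  have hQ : -(potF l₁ l₂ f * massF f) ≤ C * √(kinF f * massF f) ^ 3 := by
    calc -(potF l₁ l₂ f * massF f) = -potF l₁ l₂ f * massF f := by ring
      _ ≤ C * kinF f ^ ((3 : ℝ) / 2) * massF f ^ ((1 : ℝ) / 2) * massF f :=
        mul_le_mul_of_nonneg_right (hGN f) hM
      _ = C * √(kinF f * massF f) ^ 3 := by
        rw [← rpow_three_halves_mul_rpow_half_mul hH hM]; ring
  rw [enF, div_mul_eq_mul_div, add_mul, hs] at hE
  rw [hs] at hK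
  rw [pohF, add_mul, mul_assoc, hs]
  exact sqrt_div_three_mul_sq_le_of_cubic_bound hC hQ hE hK

end
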